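/- Let R(n) be the sum, over all subgroups H of index n in Z^2 invariant under ℓ : (x,y) ↦ (−y,x), of the number of cosets ν ∈ Z^2/H with ℓ(ν) = ν. Then R(n) = τ(n) + τ(n/2), where τ(n/2) = 0 if n is odd. -/

import Mathlib

/-!
Under `ℤ² ≅ ℤ[i]`, `(x, y) ↦ x + y i`, the rotation `ℓ` becomes multiplication by `i`. Hence the
`ℓ`-invariant subgroups of index `n` are the ideals of `ℤ[i]` of norm `n`, and a coset is fixed by
`ℓ` exactly when it is killed by `i - 1`. Every ideal is principal with a unique generator
`s + t i` with `s > 0`, `t ≥ 0`, so there are `τ(n)` of them. Since `i - 1` is a prime of norm `2`,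
the `(i - 1)`-torsion of `ℤ[i] ⧸ (ζ)` is trivial if `n` is odd, and isomorphic to
`ℤ[i] ⧸ (i - 1)`, of order `2`, if `n` is even; in that case multiplying by `(i - 1)` also matches the ideals of norm
`n / 2` with those of norm `n`, so `τ(n) = τ(n / 2)` and `R(n) = 2 τ(n) = τ(n) + τ(n / 2)`.
-/

/-- The rotation automorphism `ℓ : ℤ² → ℤ²`, `(x, y) ↦ (-y, x)`, as an additive hom. -/
def ell : (ℤ × ℤ) →+ ℤ × ℤ :=
  AddMonoidHom.mk' (fun p => (-p.2, p.1)) (by intro a b; simp [Prod.ext_iff]; ring)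

/-- `τ(n)`: the number of pairs `(s, t)` of integers with `s > 0`, `t ≥ 0`, `s² + t² = n`. -/
noncomputable def tauFn (n : ℕ) : ℕ :=
  Nat.card {st : ℤ × ℤ // 0 < st.1 ∧ 0 ≤ st.2 ∧ st.1 ^ 2 + st.2 ^ 2 = n}

open Zsqrtd
open scoped nonZeroDivisors

local notation "ℤ[i]" => GaussianInt

namespace Zsqrtd

variable {d : ℤ}

def linearEquivProd (d : ℤ) : ℤ√d ≃ₗ[ℤ] ℤ × ℤ where
  toFun z := (z.re, z.im)
  invFun p := ⟨p.1, p.2⟩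
  map_add' _ _ := rfl
  map_smul' c z := by ext <;> simp
  left_inv _ := rfl
  right_inv _ := rfl

instance : Module.Free ℤ (ℤ√d) := .of_equiv (linearEquivProd d).symm
instance : Module.Finite ℤ (ℤ√d) := .equiv (linearEquivProd d).symm

theorem algebraNorm_eq_norm (z : ℤ√d) : Algebra.norm ℤ z = z.norm := by
  rw [Algebra.norm_eq_matrix_det ((Module.Basis.finTwoProd ℤ).map (linearEquivProd d).symm),
    Matrix.det_fin_two]
  simp [Algebra.leftMulMatrix_eq_repr_mul, linearEquivProd, Zsqrtd.norm]

end Zsqrtd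

namespace Ideal.Quotient

open Submodule

variable {R : Type*} [CommRing R]

theorem torsionOf_mk_eq_span_singleton {a b : R} (hb : b ∈ R⁰) :
    torsionOf R (R ⧸ span {a * b}) (mk _ b) = span {a} := by
  ext c
  rw [mem_torsionOf_iff, Algebra.smul_def, algebraMap_eq, ← map_mul, eq_zero_iff_mem,
    mem_span_singleton, mem_span_singleton]
  constructor
  · rintro ⟨d, hd⟩
    exact ⟨d, (mul_cancel_right_mem_nonZeroDivisors hb).mp (by rw [hd]; ring)⟩
  · rintro ⟨d, rfl⟩
    exact ⟨d, by ring⟩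

theorem natCard_torsionBy_span_singleton_mul {a b : R} (ha : a ∈ R⁰) (hb : b ∈ R⁰) :
    Nat.card (torsionBy R (R ⧸ span {a * b}) a) = Nat.card (R ⧸ span {a}) :=
  calc Nat.card (torsionBy R (R ⧸ span {a * b}) a)
      _ = Nat.card (R ∙ mk (span {a * b}) b) := by rw [torsionBy_eq_span_singleton a b ha]
      _ = Nat.card (R ⧸ torsionOf R _ (mk (span {a * b}) b)) :=
        Nat.card_congr (quotTorsionOfEquivSpanSingleton R _ _).toEquiv.symm
      _ = Nat.card (R ⧸ span {a}) := by rw [torsionOf_mk_eq_span_singleton hb]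

theorem torsionBy_eq_bot_of_isCoprime {a b : R} (h : IsCoprime a b) :
    torsionBy R (R ⧸ span {b}) a = ⊥ := by
  obtain ⟨u, v, huv⟩ := h
  refine eq_bot_iff.mpr fun x hx => ?_
  have hb : b • x = 0 := by
    obtain ⟨y, rfl⟩ := mk_surjective x
    rw [Algebra.smul_def, algebraMap_eq, ← map_mul, eq_zero_iff_mem]
    exact mul_mem_right _ _ (mem_span_singleton_self b)
  rw [Submodule.mem_bot, ← one_smul R x, ← huv, add_smul, mul_smul, mul_smul,
    (mem_torsionBy_iff _ _).mp hx, hb, smul_zero, smul_zero, add_zero]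

end Ideal.Quotient

theorem Nat.card_sigma_of_card_eq {α : Type*} {β : α → Type*} {k : ℕ} (hk : k ≠ 0)
    (h : ∀ a, Nat.card (β a) = k) : Nat.card (Σ a, β a) = Nat.card α * k := by
  have e : ∀ a, β a ≃ Fin k := fun a =>
    have : Finite (β a) := Nat.finite_of_card_ne_zero (h a ▸ hk)
    Finite.equivFinOfCardEq (h a)
  rw [Nat.card_congr ((Equiv.sigmaCongrRight e).trans (Equiv.sigmaEquivProd _ _)), Nat.card_prod,
    Nat.card_fin]

theorem ell_ell (p : ℤ × ℤ) : ell (ell p) = -p := by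
  ext <;> simp [ell]

theorem map_ell_eq_self_iff (H : AddSubgroup (ℤ × ℤ)) : H.map ell = H ↔ ∀ p ∈ H, ell p ∈ H := by
  refine ⟨fun h p hp => h ▸ AddSubgroup.mem_map_of_mem ell hp, fun h => le_antisymm ?_ ?_⟩
  · exact AddSubgroup.map_le_iff_le_comap.mpr h
  · intro p hp
    exact ⟨-ell p, H.neg_mem (h p hp), by rw [map_neg, ell_ell, neg_neg]⟩

namespace GaussianInt

open Ideal

theorem isUnit_eq_one_or {u : ℤ[i]} (hu : IsUnit u) : u = 1 ∨ u = -1 ∨ u = sqrtd ∨ u = -sqrtd := by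
  obtain ⟨x, y⟩ := u
  have h : x * x + y * y = 1 := by
    simpa [Zsqrtd.norm] using (norm_eq_one_iff' (by norm_num) _).mpr hu
  have hx : -1 ≤ x ∧ x ≤ 1 := ⟨by nlinarith [mul_self_nonneg y], by nlinarith [mul_self_nonneg y]⟩
  have hy : -1 ≤ y ∧ y ≤ 1 := ⟨by nlinarith [mul_self_nonneg x], by nlinarith [mul_self_nonneg x]⟩
  obtain ⟨hx1, hx2⟩ := hx
  obtain ⟨hy1, hy2⟩ := hy
  interval_cases x <;> interval_cases y <;> simp_all [Zsqrtd.ext_iff]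

theorem eq_of_associated_of_re_pos_im_nonneg {z w : ℤ[i]} (hz : 0 < z.re ∧ 0 ≤ z.im)
    (hw : 0 < w.re ∧ 0 ≤ w.im) (h : Associated z w) : z = w := by
  obtain ⟨u, rfl⟩ := h
  rcases isUnit_eq_one_or u.isUnit with hu | hu | hu | hu <;> simp [hu] at hw ⊢ <;> omega

theorem exists_associated_re_pos_im_nonneg {z : ℤ[i]} (hz : z ≠ 0) :
    ∃ w, Associated z w ∧ 0 < w.re ∧ 0 ≤ w.im := by
  have hi : IsUnit (sqrtd : ℤ[i]) := .of_mul_eq_one (-sqrtd) (by ext <;> simp)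
  have rotate : ∀ u : ℤ[i], IsUnit u → 0 < (z * u).re ∧ 0 ≤ (z * u).im →
      ∃ w, Associated z w ∧ 0 < w.re ∧ 0 ≤ w.im :=
    fun u hu hzu => ⟨z * u, associated_mul_unit_right z u hu, hzu⟩
  have hz' : z.re ≠ 0 ∨ z.im ≠ 0 := by
    by_contra! h
    exact hz (Zsqrtd.ext h.1 h.2)
  by_cases h1 : 0 < z.re ∧ 0 ≤ z.im
  · exact rotate 1 isUnit_one (by simpa using h1)
  by_cases h2 : z.re ≤ 0 ∧ 0 < z.im
  · exact rotate (-sqrtd) hi.neg (by simp; omega)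
  by_cases h3 : z.re < 0 ∧ z.im ≤ 0
  · exact rotate (-1) isUnit_one.neg (by simp; omega)
  · exact rotate sqrtd hi (by simp; omega)

theorem absNorm_span_singleton (z : ℤ[i]) : absNorm (span {z}) = z.norm.natAbs := by
  rw [Ideal.absNorm_span_singleton, algebraNorm_eq_norm]

theorem exists_span_singleton_eq (I : Ideal ℤ[i]) : ∃ ζ, I = span {ζ} :=
  (IsPrincipalIdealRing.principal I).principal

theorem norm_sqrtd_sub_one : (sqrtd - 1 : ℤ[i]).norm = 2 := by decide

theorem absNorm_span_sqrtd_sub_one : absNorm (span {(sqrtd - 1 : ℤ[i])}) = 2 := by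
  rw [absNorm_span_singleton, norm_sqrtd_sub_one]; rfl

theorem irreducible_sqrtd_sub_one : Irreducible (sqrtd - 1 : ℤ[i]) := by
  have : IsLocalHom (normMonoidHom (d := -1)) := ⟨fun z => (isUnit_iff_norm_isUnit z).mpr⟩
  apply Irreducible.of_map (f := normMonoidHom)
  show Irreducible (sqrtd - 1 : ℤ[i]).norm
  rw [norm_sqrtd_sub_one]
  exact Int.prime_two.irreducible

theorem sqrtd_sub_one_dvd_iff {z : ℤ[i]} : sqrtd - 1 ∣ z ↔ 2 ∣ z.norm := by
  constructor
  · rintro ⟨γ, rfl⟩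
    rw [norm_mul, norm_sqrtd_sub_one]
    exact dvd_mul_right 2 _
  · obtain ⟨x, y⟩ := z
    intro h
    have hxy : 2 ∣ x + y := by
      obtain ⟨m, hm⟩ := h
      obtain ⟨k, hk⟩ := Int.even_mul_succ_self x
      obtain ⟨l, hl⟩ := Int.even_mul_succ_self y
      exact ⟨k + l - m, by simp only [Zsqrtd.norm_def] at hm; linear_combination hk + hl - hm⟩
    refine ⟨⟨(y - x) / 2, (-x - y) / 2⟩, ?_⟩
    ext <;> simp <;> omega

theorem sqrtd_sub_one_dvd_iff_two_dvd_absNorm {z : ℤ[i]} :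
    sqrtd - 1 ∣ z ↔ 2 ∣ absNorm (span {z}) := by
  rw [sqrtd_sub_one_dvd_iff, absNorm_span_singleton, ← Int.natCast_dvd]
  simp

theorem natCard_ideals_absNorm_eq_tauFn (n : ℕ) (hn : 0 < n) :
    Nat.card {I : Ideal ℤ[i] // absNorm I = n} = tauFn n := by
  symm
  apply Nat.card_congr
  refine .ofBijective (fun st => ⟨span {⟨st.1.1, st.1.2⟩}, ?_⟩) ⟨?_, ?_⟩
  · obtain ⟨⟨s, t⟩, -, -, hst⟩ := st
    have hnorm : (⟨s, t⟩ : ℤ[i]).norm = n := by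
      rw [Zsqrtd.norm_def]
      linear_combination hst
    rw [absNorm_span_singleton, hnorm, Int.natAbs_natCast]
  · rintro ⟨⟨s, t⟩, hs, ht, _⟩ ⟨⟨s', t'⟩, hs', ht', _⟩ h
    rw [Subtype.mk.injEq, span_singleton_eq_span_singleton] at h
    have := eq_of_associated_of_re_pos_im_nonneg ⟨hs, ht⟩ ⟨hs', ht'⟩ h
    simp_all
  · rintro ⟨I, hI⟩
    obtain ⟨ζ, rfl⟩ := exists_span_singleton_eq I
    have hζ : ζ ≠ 0 := by
      rintro rfl
      simp at hI
      omega
    obtain ⟨w, hζw, hw⟩ := exists_associated_re_pos_im_nonneg hζ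
    rw [absNorm_span_singleton, norm_eq_of_associated (by norm_num) hζw] at hI
    have hwn : w.re ^ 2 + w.im ^ 2 = n := by
      rw [← hI, abs_natCast_norm, Zsqrtd.norm_def]
      ring
    refine ⟨⟨(w.re, w.im), hw.1, hw.2, hwn⟩, ?_⟩
    rw [Subtype.mk.injEq, span_singleton_eq_span_singleton]
    exact hζw.symm

theorem natCard_ideals_absNorm_two_mul (m : ℕ) :
    Nat.card {I : Ideal ℤ[i] // absNorm I = 2 * m} =
      Nat.card {I : Ideal ℤ[i] // absNorm I = m} := by
  symm
  apply Nat.card_congr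
  refine .ofBijective (fun J => ⟨span {sqrtd - 1} * J.1, ?_⟩) ⟨?_, ?_⟩
  · rw [map_mul, absNorm_span_sqrtd_sub_one, J.2]
  · intro J J' h
    have hne : span {(sqrtd - 1 : ℤ[i])} ≠ 0 := by
      rw [ne_eq, Ideal.zero_eq_bot, span_singleton_eq_bot]
      exact irreducible_sqrtd_sub_one.ne_zero
    exact Subtype.ext (mul_left_cancel₀ hne (congrArg Subtype.val h))
  · rintro ⟨I, hI⟩
    obtain ⟨ζ, rfl⟩ := exists_span_singleton_eq I
    obtain ⟨γ, rfl⟩ := sqrtd_sub_one_dvd_iff_two_dvd_absNorm.mpr (hI ▸ dvd_mul_right 2 m)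
    rw [← span_singleton_mul_span_singleton, map_mul, absNorm_span_sqrtd_sub_one] at hI
    exact ⟨⟨span {γ}, by omega⟩, Subtype.ext (span_singleton_mul_span_singleton _ _)⟩

theorem natCard_torsionBy_sqrtd_sub_one {I : Ideal ℤ[i]} (hI : I ≠ ⊥) :
    Nat.card (Submodule.torsionBy ℤ[i] (ℤ[i] ⧸ I) (sqrtd - 1)) =
      if 2 ∣ absNorm I then 2 else 1 := by
  obtain ⟨ζ, rfl⟩ := exists_span_singleton_eq I
  split_ifs with h <;> rw [← sqrtd_sub_one_dvd_iff_two_dvd_absNorm] at h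
  · obtain ⟨γ, rfl⟩ := h
    have hγ : γ ≠ 0 := by
      rintro rfl
      simp at hI
    rw [Ideal.Quotient.natCard_torsionBy_span_singleton_mul
      (mem_nonZeroDivisors_of_ne_zero irreducible_sqrtd_sub_one.ne_zero)
      (mem_nonZeroDivisors_of_ne_zero hγ), ← Submodule.cardQuot_apply, ← absNorm_apply,
      absNorm_span_sqrtd_sub_one]
  · rw [Ideal.Quotient.torsionBy_eq_bot_of_isCoprime
      (irreducible_sqrtd_sub_one.coprime_iff_not_dvd.mpr h)]
    exact Nat.card_unique

def ofProd : ℤ × ℤ ≃+ ℤ[i] := (Zsqrtd.linearEquivProd (-1)).symm.toAddEquiv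

theorem ofProd_ell (p : ℤ × ℤ) : ofProd (ell p) = sqrtd * ofProd p := by
  ext <;> simp [ofProd, ell, linearEquivProd]

def addSubgroupOfIdeal (I : Ideal ℤ[i]) : AddSubgroup (ℤ × ℤ) :=
  I.toAddSubgroup.comap ofProd.toAddMonoidHom

theorem map_ell_addSubgroupOfIdeal (I : Ideal ℤ[i]) :
    (addSubgroupOfIdeal I).map ell = addSubgroupOfIdeal I :=
  (map_ell_eq_self_iff _).mpr fun p hp => by
    change ofProd (ell p) ∈ I
    rw [ofProd_ell]
    exact I.mul_mem_left _ hp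

theorem index_addSubgroupOfIdeal (I : Ideal ℤ[i]) : (addSubgroupOfIdeal I).index = absNorm I :=
  AddSubgroup.index_comap_of_surjective _ ofProd.surjective

def idealOfAddSubgroup (H : AddSubgroup (ℤ × ℤ)) (hH : H.map ell = H) : Ideal ℤ[i] where
  toAddSubmonoid := (H.comap ofProd.symm.toAddMonoidHom).toAddSubmonoid
  smul_mem' c z hz := by
    have hsqrtd : ofProd.symm (sqrtd * z) ∈ H := by
      have hell : ofProd.symm (sqrtd * z) = ell (ofProd.symm z) :=
        ofProd.symm_apply_eq.mpr (by rw [ofProd_ell, AddEquiv.apply_symm_apply])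
      exact hell ▸ (map_ell_eq_self_iff H).mp hH _ hz
    obtain ⟨x, y⟩ := c
    have hc : (⟨x, y⟩ : ℤ[i]) • z = x • z + y • (sqrtd * z) := by
      rw [smul_eq_mul, Zsqrtd.decompose, zsmul_eq_mul, zsmul_eq_mul]
      ring
    change ofProd.symm _ ∈ H
    rw [hc, map_add, map_zsmul, map_zsmul]
    exact H.add_mem (H.zsmul_mem hz x) (H.zsmul_mem hsqrtd y)

theorem addSubgroupOfIdeal_idealOfAddSubgroup (H : AddSubgroup (ℤ × ℤ)) (hH : H.map ell = H) :
    addSubgroupOfIdeal (idealOfAddSubgroup H hH) = H := by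
  ext p
  change ofProd.symm (ofProd p) ∈ H ↔ p ∈ H
  rw [AddEquiv.symm_apply_apply]

theorem idealOfAddSubgroup_addSubgroupOfIdeal (I : Ideal ℤ[i]) :
    idealOfAddSubgroup (addSubgroupOfIdeal I) (map_ell_addSubgroupOfIdeal I) = I := by
  ext z
  change ofProd (ofProd.symm z) ∈ I ↔ z ∈ I
  rw [AddEquiv.apply_symm_apply]

def idealsEquivInvariantAddSubgroups (n : ℕ) :
    {I : Ideal ℤ[i] // absNorm I = n} ≃
      {H : AddSubgroup (ℤ × ℤ) // H.index = n ∧ H.map ell = H} where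
  toFun I :=
    ⟨addSubgroupOfIdeal I, by rw [index_addSubgroupOfIdeal, I.2], map_ell_addSubgroupOfIdeal I⟩
  invFun H := ⟨idealOfAddSubgroup H.1 H.2.2, by
    rw [← index_addSubgroupOfIdeal, addSubgroupOfIdeal_idealOfAddSubgroup, H.2.1]⟩
  left_inv I := Subtype.ext (idealOfAddSubgroup_addSubgroupOfIdeal I)
  right_inv H := Subtype.ext (addSubgroupOfIdeal_idealOfAddSubgroup H.1 H.2.2)

def quotientAddSubgroupOfIdealEquiv (I : Ideal ℤ[i]) : (ℤ × ℤ) ⧸ addSubgroupOfIdeal I ≃+ ℤ[i] ⧸ I :=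
  QuotientAddGroup.congr _ I.toAddSubgroup ofProd
    (AddSubgroup.map_comap_eq_self_of_surjective ofProd.surjective _)

def fixedCosetsEquiv (I : Ideal ℤ[i]) :
    {ν : (ℤ × ℤ) ⧸ addSubgroupOfIdeal I // ∀ g : ℤ × ℤ, QuotientAddGroup.mk g = ν →
      (QuotientAddGroup.mk (ell g) : (ℤ × ℤ) ⧸ addSubgroupOfIdeal I) = ν} ≃
    Submodule.torsionBy ℤ[i] (ℤ[i] ⧸ I) (sqrtd - 1) :=
  let q := quotientAddSubgroupOfIdealEquiv I
  have q_mk_ell (g : ℤ × ℤ) :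
      q (QuotientAddGroup.mk (ell g)) = (sqrtd : ℤ[i]) • q (QuotientAddGroup.mk g) := by
    change Ideal.Quotient.mk I (ofProd (ell g)) =
      (sqrtd : ℤ[i]) • Ideal.Quotient.mk I (ofProd g)
    rw [ofProd_ell, map_mul, Algebra.smul_def, Ideal.Quotient.algebraMap_eq]
  q.toEquiv.subtypeEquiv fun ν => by
    obtain ⟨g, rfl⟩ := QuotientAddGroup.mk_surjective ν
    rw [Submodule.mem_torsionBy_iff, sub_smul, one_smul, sub_eq_zero]
    constructor
    · intro h
      rw [AddEquiv.toEquiv_eq_coe, AddEquiv.coe_toEquiv, ← q_mk_ell, h g rfl]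
    · intro h g' hg'
      apply q.injective
      rw [q_mk_ell, hg']
      exact h

def fixedCosetPairsEquiv (n : ℕ) :
    {p : Σ H : AddSubgroup (ℤ × ℤ), (ℤ × ℤ) ⧸ H //
        p.1.index = n ∧ p.1.map ell = p.1 ∧
        ∀ g : ℤ × ℤ, QuotientAddGroup.mk g = p.2 →
          (QuotientAddGroup.mk (ell g) : (ℤ × ℤ) ⧸ p.1) = p.2} ≃
      Σ I : {I : Ideal ℤ[i] // absNorm I = n}, Submodule.torsionBy ℤ[i] (ℤ[i] ⧸ I.1) (sqrtd - 1) :=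
  let sigmaOfSubtype : _ ≃ Σ H : {H : AddSubgroup (ℤ × ℤ) // H.index = n ∧ H.map ell = H},
      {ν : (ℤ × ℤ) ⧸ H.1 // ∀ g : ℤ × ℤ, QuotientAddGroup.mk g = ν →
        (QuotientAddGroup.mk (ell g) : (ℤ × ℤ) ⧸ H.1) = ν} :=
    { toFun p := ⟨⟨p.1.1, p.2.1, p.2.2.1⟩, ⟨p.1.2, p.2.2.2⟩⟩
      invFun q := ⟨⟨q.1.1, q.2.1⟩, q.1.2.1, q.1.2.2, q.2.2⟩
      left_inv _ := rfl
      right_inv _ := rfl }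
  sigmaOfSubtype.trans <| (Equiv.sigmaCongrLeft (idealsEquivInvariantAddSubgroups n)).symm.trans <|
    Equiv.sigmaCongrRight fun I => fixedCosetsEquiv I.1

end GaussianInt

/-- The total number `R(n)` of pairs `(H, ν)`, where `H ≤ ℤ²` is an `ℓ`-invariant subgroup
of index `n` and `ν ∈ ℤ²/H` is a coset fixed by `ℓ`, equals `τ(n) + τ(n/2)` (with
`τ(n/2) = 0` for odd `n`). -/
theorem sum_fixed_cosets (n : ℕ) (hn : 0 < n) :
    Nat.card {p : Σ H : AddSubgroup (ℤ × ℤ), (ℤ × ℤ) ⧸ H //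
        p.1.index = n ∧ p.1.map ell = p.1 ∧
        ∀ g : ℤ × ℤ, QuotientAddGroup.mk g = p.2 →
          (QuotientAddGroup.mk (ell g) : (ℤ × ℤ) ⧸ p.1) = p.2} =
      tauFn n + (if 2 ∣ n then tauFn (n / 2) else 0) := by
  have hfiber (I : {I : Ideal ℤ[i] // I.absNorm = n}) :
      Nat.card (Submodule.torsionBy ℤ[i] (ℤ[i] ⧸ I.1) (sqrtd - 1)) = if 2 ∣ n then 2 else 1 := by
    have hI : I.1 ≠ ⊥ := by
      rw [Ne, ← Ideal.absNorm_eq_zero_iff, I.2]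
      exact hn.ne'
    rw [GaussianInt.natCard_torsionBy_sqrtd_sub_one hI, I.2]
  rw [Nat.card_congr (GaussianInt.fixedCosetPairsEquiv n),
    Nat.card_sigma_of_card_eq (by split_ifs <;> simp) hfiber,
    GaussianInt.natCard_ideals_absNorm_eq_tauFn n hn]
  split_ifs with h
  · obtain ⟨m, rfl⟩ := h
    have htau : tauFn (2 * m) = tauFn m := by
      rw [← GaussianInt.natCard_ideals_absNorm_eq_tauFn _ hn,
        GaussianInt.natCard_ideals_absNorm_two_mul,
        GaussianInt.natCard_ideals_absNorm_eq_tauFn m (by omega)]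
    rw [Nat.mul_div_cancel_left m two_pos, htau, mul_two]
  · rw [mul_one, add_zero]
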